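/- For all natural n ≥ 1, ỹ_n + 2ỹ_{n+1} < 1 + c/2. -/

import Mathlib

/-!
Since `(-1)^n φ^(1-n) = φ ψ^n` with `ψ = -φ⁻¹ = 1 - φ` the conjugate of the golden ratio, the
increments of `ỹ` form a geometric sequence, and summing it gives `ỹ_n = (c/2)(2 + ψ - ψ^n)`.
As `c (4 + ψ) = 2`, this turns the claim into
`1 + c/2 - (ỹ_n + 2ỹ_{n+1}) = (c/2)(1 + 2ψ)(ψ^n - 1)`, a product of two negative factors
because `ψ < -1/2` and `|ψ| < 1`.
-/

noncomputable def c : ℝ := 4 / (9 - Real.sqrt 5)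
noncomputable def φ : ℝ := (1 + Real.sqrt 5) / 2

open Real

local notation "ψ" => Real.goldenConj

lemma φ_eq_goldenRatio : φ = goldenRatio := rfl

lemma c_mul_four_add_goldenConj : c * (4 + ψ) = 2 := by
  have h : 9 - √5 ≠ 0 := by
    nlinarith [sq_sqrt (show (0 : ℝ) ≤ 5 by norm_num), sqrt_nonneg 5]
  unfold c goldenConj
  field_simp
  ring

lemma c_pos : 0 < c := by
  have h := c_mul_four_add_goldenConj
  nlinarith [neg_one_lt_goldenConj]

lemma one_add_two_mul_goldenConj_neg : 1 + 2 * ψ < 0 := by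
  have h : (2 : ℝ) < √5 := (lt_sqrt zero_le_two).2 (by norm_num)
  unfold goldenConj
  linarith

lemma goldenConj_pow_lt_one {n : ℕ} (hn : n ≠ 0) : ψ ^ n < 1 := by
  have h : |ψ| < 1 := abs_lt.2 ⟨neg_one_lt_goldenConj, goldenConj_neg.trans one_pos⟩
  calc ψ ^ n ≤ |ψ| ^ n := (le_abs_self _).trans (abs_pow ψ n).le
    _ < 1 := pow_lt_one₀ (abs_nonneg ψ) h hn

lemma neg_one_pow_mul_zpow_one_sub {K : Type*} [Field K] {x : K} (hx : x ≠ 0) (n : ℕ) :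
    (-1) ^ n * x ^ ((1 : ℤ) - n) = x * (-x⁻¹) ^ n := by
  rw [zpow_sub₀ hx, zpow_one, zpow_natCast, neg_pow x⁻¹, inv_pow]
  field_simp

lemma one_sub_mul_eq_of_succ_eq_add_mul_pow {R : Type*} [CommRing R] {y : ℕ → R} {a r : R}
    (h : ∀ n, 1 ≤ n → y (n + 1) = y n + a * r ^ n) :
    ∀ n, 1 ≤ n → (1 - r) * y n = (1 - r) * y 1 + a * (r - r ^ n) := by
  intro n hn
  induction n, hn using Nat.le_induction with
  | base => ring
  | succ n hn ih => linear_combination ih + (1 - r) * h n hn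

lemma closed_form_of_recurrence (y : ℕ → ℝ) (h1 : y 1 = c)
    (hrec : ∀ n : ℕ, 1 ≤ n →
      2 * y (n + 1) = 2 * y n + c * (-1 : ℝ) ^ n * φ ^ ((1 : ℤ) - (n : ℤ)))
    (n : ℕ) (hn : 1 ≤ n) :
    y n = c / 2 * (2 + ψ - ψ ^ n) := by
  have hstep : ∀ n, 1 ≤ n → y (n + 1) = y n + c * goldenRatio / 2 * ψ ^ n := by
    intro n hn
    have h := hrec n hn
    rw [mul_assoc, φ_eq_goldenRatio, neg_one_pow_mul_zpow_one_sub goldenRatio_ne_zero,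
      inv_goldenRatio, neg_neg] at h
    linear_combination h / 2
  have h := one_sub_mul_eq_of_succ_eq_add_mul_pow hstep n hn
  rw [one_sub_goldenRatio, h1] at h
  apply mul_left_cancel₀ goldenRatio_ne_zero
  linear_combination h + c * goldenRatio * goldenRatio_add_goldenConj / 2

theorem stmt7_general (y : ℕ → ℝ) (h1 : y 1 = c)
    (hrec : ∀ n : ℕ, 1 ≤ n →
      2 * y (n + 1) = 2 * y n + c * (-1 : ℝ) ^ n * φ ^ ((1 : ℤ) - (n : ℤ)))
    (n : ℕ) (hn : 1 ≤ n) :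
    y n + 2 * y (n + 1) < 1 + c / 2 := by
  have hgap : 1 + c / 2 - (y n + 2 * y (n + 1)) = c / 2 * ((1 + 2 * ψ) * (ψ ^ n - 1)) := by
    rw [closed_form_of_recurrence y h1 hrec n hn, closed_form_of_recurrence y h1 hrec (n + 1) (by omega)]
    linear_combination (-c_mul_four_add_goldenConj) / 2
  have hpos : 0 < c / 2 * ((1 + 2 * ψ) * (ψ ^ n - 1)) :=
    mul_pos (half_pos c_pos) (mul_pos_of_neg_of_neg one_add_two_mul_goldenConj_neg
      (sub_neg.2 (goldenConj_pow_lt_one (by omega))))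
  linarith

theorem stmt7 (y : ℕ → ℝ) (h1 : y 1 = c) (h2 : y 2 = c / 2)
    (hrec : ∀ n : ℕ, 1 ≤ n →
      2 * y (n + 1) = 2 * y n + c * (-1 : ℝ) ^ n * φ ^ ((1 : ℤ) - (n : ℤ)))
    (n : ℕ) (hn : 1 ≤ n) :
    y n + 2 * y (n + 1) < 1 + c / 2 :=
  stmt7_general y h1 hrec n hn
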